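/- arXiv:1101.1625 — 5 statements merged into one kernel-verified Lean document; each statement's English description precedes it below -/
import Mathlib

section
/- Let κ ∈ C_c^∞(ℝ³) with κ ≥ 0, ∫_{ℝ³} κ = 1, and supp κ contained in the closed unit ball, and set κ_ε(z) = ε^{-3}κ(z/ε) for ε>0. Let f ∈ L¹(ℝ³×ℝ³) and let 0 < μ ≤ ε. Define I(x,ξ) = ∫_{ℝ³}∫_{ℝ³} (η·∇κ_ε(ζ)) κ_μ(η) f(x−ζ, ξ−η) dζ dη. Then ‖I‖_{L¹(ℝ³×ℝ³)} ≤ (μ/ε) · ‖∇κ‖_{L¹(ℝ³)} · ‖f‖_{L¹(ℝ³×ℝ³)}. In particular, if μ = μ(ε) satisfies 0 < μ(ε) ≤ ε², then I → 0 in L¹(ℝ⁶) as ε → 0. -/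
open MeasureTheory Real Set Filter ENNReal

noncomputable section

/-- Points of ℝ³. -/
abbrev V3 : Type := Fin 3 → ℝ

/-- The rescaled mollifier `κ_ε(z) = ε⁻³ κ(z/ε)`. -/
def scaledMoll (κ : V3 → ℝ) (ε : ℝ) (z : V3) : ℝ := (ε ^ 3)⁻¹ * κ (ε⁻¹ • z)

/-- The two-scale commutator integrand
`I(x,ξ) = ∫∫ (η·∇κ_ε(ζ)) κ_μ(η) f(x−ζ, ξ−η) dζ dη`,
where `η·∇κ_ε(ζ)` is the derivative of `κ_ε` at `ζ` in the direction `η`. -/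
def commI (κ : V3 → ℝ) (f : V3 × V3 → ℝ) (ε μ : ℝ) (y : V3 × V3) : ℝ :=
  ∫ ζ : V3, ∫ η : V3,
    (fderiv ℝ (scaledMoll κ ε) ζ η) * scaledMoll κ μ η * f (y.1 - ζ, y.2 - η)

lemma fderiv_scaledMoll (κ : V3 → ℝ) (hκ : ContDiff ℝ (⊤ : ℕ∞) κ) (ε : ℝ) (ζ η : V3) :
    fderiv ℝ (scaledMoll κ ε) ζ η = (ε ^ 3)⁻¹ * (ε⁻¹ * fderiv ℝ κ (ε⁻¹ • ζ) η) := by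
  have h1 : HasFDerivAt (fun z : V3 => ε⁻¹ • z)
      (ε⁻¹ • ContinuousLinearMap.id ℝ V3) ζ := (hasFDerivAt_id ζ).const_smul ε⁻¹
  have h2 : HasFDerivAt κ (fderiv ℝ κ (ε⁻¹ • ζ)) (ε⁻¹ • ζ) :=
    (hκ.differentiable (by simp) _).hasFDerivAt
  have h3 : HasFDerivAt (fun z : V3 => κ (ε⁻¹ • z))
      ((fderiv ℝ κ (ε⁻¹ • ζ)).comp (ε⁻¹ • ContinuousLinearMap.id ℝ V3)) ζ := h2.comp ζ h1
  have h5 : fderiv ℝ (scaledMoll κ ε) ζ =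
      (ε ^ 3)⁻¹ • ((fderiv ℝ κ (ε⁻¹ • ζ)).comp (ε⁻¹ • ContinuousLinearMap.id ℝ V3)) :=
    (h3.const_mul ((ε ^ 3)⁻¹)).fderiv
  rw [h5]; simp [smul_eq_mul, _root_.map_smul, mul_comm]

lemma main_bound (κ : V3 → ℝ) (hκsmooth : ContDiff ℝ (⊤ : ℕ∞) κ) (hκpos : ∀ z, 0 ≤ κ z)
    (hκint : ∫ z : V3, κ z = 1)
    (hκsupp : Function.support κ ⊆ Metric.closedBall (0 : V3) 1)
    (f : V3 × V3 → ℝ) (hf : Integrable f) (ε μ : ℝ) (hμ : 0 < μ) (hμε : μ ≤ ε) :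
    ∫⁻ y : V3 × V3, ENNReal.ofReal |commI κ f ε μ y| ≤
      ENNReal.ofReal ((μ / ε) * (∫ z : V3, ‖fderiv ℝ κ z‖) * (∫ y : V3 × V3, |f y|)) := by
  have hε : 0 < ε := hμ.trans_le hμε
  -- auxiliary functions
  set g : V3 → ℝ := fun ζ => (ε ^ 3)⁻¹ * ε⁻¹ * ‖fderiv ℝ κ (ε⁻¹ • ζ)‖ with hgdef
  set h : V3 → ℝ := fun η => μ * scaledMoll κ μ η with hhdef
  have hgnn : ∀ ζ, 0 ≤ g ζ := fun ζ => by positivity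
  have hsmnn : ∀ η, 0 ≤ scaledMoll κ μ η := fun η => by
    have := hκpos (μ⁻¹ • η); unfold scaledMoll; positivity
  have hhnn : ∀ η, 0 ≤ h η := fun η => mul_nonneg hμ.le (hsmnn η)
  have hDκcont : Continuous (fderiv ℝ κ) := hκsmooth.continuous_fderiv (by simp)
  have hκcont : Continuous κ := hκsmooth.continuous
  -- pointwise bound
  have key : ∀ (y : V3 × V3) (ζ η : V3),
      |fderiv ℝ (scaledMoll κ ε) ζ η * scaledMoll κ μ η * f (y.1 - ζ, y.2 - η)| ≤
        g ζ * h η * |f (y - (ζ, η))| := by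
    intro y ζ η
    have hA : |fderiv ℝ (scaledMoll κ ε) ζ η| ≤ g ζ * ‖η‖ := by
      rw [fderiv_scaledMoll κ hκsmooth ε ζ η]
      have h1 : |fderiv ℝ κ (ε⁻¹ • ζ) η| ≤ ‖fderiv ℝ κ (ε⁻¹ • ζ)‖ * ‖η‖ := by
        rw [← Real.norm_eq_abs]; exact (fderiv ℝ κ (ε⁻¹ • ζ)).le_opNorm η
      rw [abs_mul, abs_mul, abs_of_nonneg (by positivity : (0:ℝ) ≤ (ε^3)⁻¹),
        abs_of_nonneg (by positivity : (0:ℝ) ≤ ε⁻¹), hgdef]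
      calc (ε ^ 3)⁻¹ * (ε⁻¹ * |fderiv ℝ κ (ε⁻¹ • ζ) η|)
          ≤ (ε ^ 3)⁻¹ * (ε⁻¹ * (‖fderiv ℝ κ (ε⁻¹ • ζ)‖ * ‖η‖)) := by
            gcongr
        _ = (ε ^ 3)⁻¹ * ε⁻¹ * ‖fderiv ℝ κ (ε⁻¹ • ζ)‖ * ‖η‖ := by ring
    have hB : ‖η‖ * scaledMoll κ μ η ≤ μ * scaledMoll κ μ η := by
      rcases eq_or_ne (scaledMoll κ μ η) 0 with h0 | h0
      · rw [h0]; simp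
      · have hκne : κ (μ⁻¹ • η) ≠ 0 := by
          intro hc; apply h0; unfold scaledMoll; rw [hc, mul_zero]
        have hmem := hκsupp (Function.mem_support.mpr hκne)
        rw [Metric.mem_closedBall, dist_zero_right] at hmem
        have : ‖μ⁻¹ • η‖ = μ⁻¹ * ‖η‖ := by
          rw [norm_smul, Real.norm_eq_abs, abs_of_nonneg (by positivity)]
        have hη : ‖η‖ ≤ μ := by
          rw [this] at hmem
          calc ‖η‖ = μ * (μ⁻¹ * ‖η‖) := by field_simp
            _ ≤ μ * 1 := by gcongr
            _ = μ := mul_one μ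
        exact mul_le_mul_of_nonneg_right hη (hsmnn η)
    have hfy : f (y.1 - ζ, y.2 - η) = f (y - (ζ, η)) := rfl
    rw [hfy, abs_mul, abs_mul, abs_of_nonneg (hsmnn η)]
    have step1 : |fderiv ℝ (scaledMoll κ ε) ζ η| * scaledMoll κ μ η ≤ g ζ * h η := by
      calc |fderiv ℝ (scaledMoll κ ε) ζ η| * scaledMoll κ μ η
          ≤ (g ζ * ‖η‖) * scaledMoll κ μ η :=
            mul_le_mul_of_nonneg_right hA (hsmnn η)
        _ = g ζ * (‖η‖ * scaledMoll κ μ η) := by ring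
        _ ≤ g ζ * (μ * scaledMoll κ μ η) := mul_le_mul_of_nonneg_left hB (hgnn ζ)
        _ = g ζ * h η := rfl
    exact mul_le_mul_of_nonneg_right step1 (abs_nonneg _)
  -- ENNReal-valued majorants
  set E : V3 × V3 → ℝ≥0∞ := fun p => ENNReal.ofReal (g p.1 * h p.2) with hEdef
  set N : V3 × V3 → ℝ≥0∞ := fun w => (‖f w‖₊ : ℝ≥0∞) with hNdef
  have hgcont : Continuous g :=
    continuous_const.mul ((hDκcont.comp (continuous_const_smul ε⁻¹)).norm)
  have hhcont : Continuous h := by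
    unfold h
    unfold scaledMoll
    exact continuous_const.mul (continuous_const.mul (hκcont.comp (continuous_const_smul μ⁻¹)))
  have hEmeas : Measurable E :=
    ((hgcont.comp continuous_fst).mul (hhcont.comp continuous_snd)).measurable.ennreal_ofReal
  have hNmeas : AEMeasurable N (volume : Measure (V3 × V3)) :=
    hf.aestronglyMeasurable.enorm
  -- step 1 : pointwise lintegral bound
  have step1 : ∀ y : V3 × V3, ENNReal.ofReal |commI κ f ε μ y| ≤
      ∫⁻ ζ : V3, ∫⁻ η : V3, E (ζ, η) * N (y - (ζ, η)) := by
    intro y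
    have hsplit : ∀ ζ η : V3, ENNReal.ofReal (g ζ * h η * |f (y - (ζ, η))|) =
        E (ζ, η) * N (y - (ζ, η)) := by
      intro ζ η
      rw [ENNReal.ofReal_mul (mul_nonneg (hgnn ζ) (hhnn η))]
      congr 1
      rw [← Real.norm_eq_abs, ofReal_norm, enorm_eq_nnnorm]
    calc ENNReal.ofReal |commI κ f ε μ y|
        = (‖∫ ζ : V3, ∫ η : V3, fderiv ℝ (scaledMoll κ ε) ζ η * scaledMoll κ μ η *
            f (y.1 - ζ, y.2 - η)‖₊ : ℝ≥0∞) := by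
          rw [← enorm_eq_nnnorm, ← ofReal_norm, Real.norm_eq_abs]; rfl
      _ ≤ ∫⁻ ζ : V3, (‖∫ η : V3, fderiv ℝ (scaledMoll κ ε) ζ η * scaledMoll κ μ η *
            f (y.1 - ζ, y.2 - η)‖₊ : ℝ≥0∞) := enorm_integral_le_lintegral_enorm _
      _ ≤ ∫⁻ ζ : V3, ∫⁻ η : V3, (‖fderiv ℝ (scaledMoll κ ε) ζ η * scaledMoll κ μ η *
            f (y.1 - ζ, y.2 - η)‖₊ : ℝ≥0∞) :=
          lintegral_mono fun ζ => enorm_integral_le_lintegral_enorm _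
      _ ≤ ∫⁻ ζ : V3, ∫⁻ η : V3, E (ζ, η) * N (y - (ζ, η)) := by
          refine lintegral_mono fun ζ => lintegral_mono fun η => ?_
          rw [← hsplit ζ η, ← enorm_eq_nnnorm, ← ofReal_norm, Real.norm_eq_abs]
          exact ENNReal.ofReal_le_ofReal (key y ζ η)
  -- instances for the product volume
  haveI hinv : Measure.IsAddRightInvariant (volume : Measure (V3 × V3)) := by
    rw [Measure.volume_eq_prod]; infer_instance
  haveI hsf : SFinite (volume : Measure (V3 × V3)) := by
    rw [Measure.volume_eq_prod]; infer_instance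
  -- measurability of translated N
  have hNy : ∀ y : V3 × V3, AEMeasurable (fun p : V3 × V3 => E p * N (y - p))
      (volume : Measure (V3 × V3)) := by
    intro y
    exact hEmeas.aemeasurable.mul (hNmeas.comp_quasiMeasurePreserving
      (quasiMeasurePreserving_sub_left_of_right_invariant (volume : Measure (V3 × V3)) y))
  have step2 : ∀ y : V3 × V3, (∫⁻ ζ : V3, ∫⁻ η : V3, E (ζ, η) * N (y - (ζ, η))) =
      ∫⁻ p : V3 × V3, E p * N (y - p) := by
    intro y
    exact lintegral_lintegral (μ := (volume : Measure V3)) (ν := (volume : Measure V3))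
      (f := fun ζ η => E (ζ, η) * N (y - (ζ, η))) (hNy y)
  have hBig : AEMeasurable (fun q : (V3 × V3) × (V3 × V3) => E q.2 * N (q.1 - q.2))
      ((volume : Measure (V3 × V3)).prod (volume : Measure (V3 × V3))) := by
    refine ((hEmeas.comp measurable_snd).aemeasurable).mul
      (hNmeas.comp_quasiMeasurePreserving ?_)
    exact quasiMeasurePreserving_sub_of_right_invariant
      (μ := (volume : Measure (V3 × V3))) (ν := (volume : Measure (V3 × V3)))
  -- integrability and values of g, h
  have htsupp : tsupport κ ⊆ Metric.closedBall (0 : V3) 1 :=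
    closure_minimal hκsupp Metric.isClosed_closedBall
  have hgint : Integrable g := by
    refine hgcont.integrable_of_hasCompactSupport ?_
    refine HasCompactSupport.intro (isCompact_closedBall (0 : V3) ε) fun ζ hζ => ?_
    have hD : fderiv ℝ κ (ε⁻¹ • ζ) = 0 := by
      by_contra hne
      have hmem : ε⁻¹ • ζ ∈ tsupport κ :=
        support_fderiv_subset ℝ (Function.mem_support.mpr hne)
      have h1 : ‖ε⁻¹ • ζ‖ ≤ 1 := by
        have := htsupp hmem
        rwa [Metric.mem_closedBall, dist_zero_right] at this
      rw [norm_smul, Real.norm_eq_abs, abs_of_nonneg (by positivity : (0:ℝ) ≤ ε⁻¹)] at h1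
      apply hζ
      rw [Metric.mem_closedBall, dist_zero_right]
      calc ‖ζ‖ = ε * (ε⁻¹ * ‖ζ‖) := by field_simp
        _ ≤ ε * 1 := by gcongr
        _ = ε := mul_one ε
    simp only [hgdef, hD, norm_zero, mul_zero]
  have hgval : (∫ ζ : V3, g ζ) = ε⁻¹ * ∫ z : V3, ‖fderiv ℝ κ z‖ := by
    simp only [hgdef]
    rw [MeasureTheory.integral_const_mul,
      MeasureTheory.Measure.integral_comp_inv_smul_of_nonneg volume
        (fun z => ‖fderiv ℝ κ z‖) hε.le]
    simp only [smul_eq_mul]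
    have h3 : Module.finrank ℝ V3 = 3 := by simp
    rw [h3]
    field_simp
  have hsmint : Integrable (scaledMoll κ μ) := by
    have hc : Continuous (scaledMoll κ μ) := by
      unfold scaledMoll
      exact continuous_const.mul (hκcont.comp (continuous_const_smul μ⁻¹))
    refine hc.integrable_of_hasCompactSupport ?_
    refine HasCompactSupport.intro (isCompact_closedBall (0 : V3) μ) fun η hη => ?_
    have hD : κ (μ⁻¹ • η) = 0 := by
      by_contra hne
      have hmem := hκsupp (Function.mem_support.mpr hne)
      rw [Metric.mem_closedBall, dist_zero_right, norm_smul, Real.norm_eq_abs,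
        abs_of_nonneg (by positivity : (0:ℝ) ≤ μ⁻¹)] at hmem
      apply hη
      rw [Metric.mem_closedBall, dist_zero_right]
      calc ‖η‖ = μ * (μ⁻¹ * ‖η‖) := by field_simp
        _ ≤ μ * 1 := by gcongr
        _ = μ := mul_one μ
    unfold scaledMoll
    rw [hD, mul_zero]
  have hsmval : (∫ η : V3, scaledMoll κ μ η) = 1 := by
    unfold scaledMoll
    rw [MeasureTheory.integral_const_mul,
      MeasureTheory.Measure.integral_comp_inv_smul_of_nonneg volume κ hμ.le]
    simp only [smul_eq_mul]
    have h3 : Module.finrank ℝ V3 = 3 := by simp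
    rw [h3, hκint]
    field_simp
  have hhint : Integrable h := hsmint.const_mul μ
  have hhval : (∫ η : V3, h η) = μ := by
    simp only [hhdef]
    rw [MeasureTheory.integral_const_mul, hsmval, mul_one]
  -- lintegral values
  have hlintg : (∫⁻ ζ : V3, ENNReal.ofReal (g ζ)) =
      ENNReal.ofReal (ε⁻¹ * ∫ z : V3, ‖fderiv ℝ κ z‖) := by
    rw [← ofReal_integral_eq_lintegral_ofReal hgint (Eventually.of_forall hgnn), hgval]
  have hlinth : (∫⁻ η : V3, ENNReal.ofReal (h η)) = ENNReal.ofReal μ := by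
    rw [← ofReal_integral_eq_lintegral_ofReal hhint (Eventually.of_forall hhnn), hhval]
  have hEval : (∫⁻ p : V3 × V3, E p) =
      ENNReal.ofReal (ε⁻¹ * ∫ z : V3, ‖fderiv ℝ κ z‖) * ENNReal.ofReal μ := by
    have h1 : ∀ p : V3 × V3, E p = ENNReal.ofReal (g p.1) * ENNReal.ofReal (h p.2) :=
      fun p => ENNReal.ofReal_mul (hgnn _)
    calc (∫⁻ p : V3 × V3, E p)
        = ∫⁻ p : V3 × V3, ENNReal.ofReal (g p.1) * ENNReal.ofReal (h p.2)
            ∂((volume : Measure V3).prod (volume : Measure V3)) := by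
          simp_rw [h1]; rfl
      _ = (∫⁻ ζ : V3, ENNReal.ofReal (g ζ)) * ∫⁻ η : V3, ENNReal.ofReal (h η) :=
          lintegral_prod_mul (hgcont.measurable.ennreal_ofReal.aemeasurable)
            (hhcont.measurable.ennreal_ofReal.aemeasurable)
      _ = _ := by rw [hlintg, hlinth]
  have hNval : (∫⁻ w : V3 × V3, N w) = ENNReal.ofReal (∫ y : V3 × V3, |f y|) := by
    have h1 : ∀ w : V3 × V3, N w = ENNReal.ofReal |f w| := by
      intro w
      simp only [hNdef, ← enorm_eq_nnnorm, ← ofReal_norm, Real.norm_eq_abs]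
    simp_rw [h1]
    rw [← ofReal_integral_eq_lintegral_ofReal hf.abs
      (Eventually.of_forall fun x => abs_nonneg _)]
  -- main chain
  have hI1 : (0:ℝ) ≤ ∫ z : V3, ‖fderiv ℝ κ z‖ := integral_nonneg fun z => norm_nonneg _
  have hI2 : (0:ℝ) ≤ ∫ y : V3 × V3, |f y| := integral_nonneg fun y => abs_nonneg _
  calc ∫⁻ y : V3 × V3, ENNReal.ofReal |commI κ f ε μ y|
      ≤ ∫⁻ y : V3 × V3, ∫⁻ p : V3 × V3, E p * N (y - p) := lintegral_mono fun y =>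
        (step1 y).trans_eq (step2 y)
    _ = ∫⁻ p : V3 × V3, ∫⁻ y : V3 × V3, E p * N (y - p) :=
        lintegral_lintegral_swap (μ := (volume : Measure (V3 × V3)))
          (ν := (volume : Measure (V3 × V3)))
          (f := fun y p => E p * N (y - p)) hBig
    _ = ∫⁻ p : V3 × V3, E p * ∫⁻ y : V3 × V3, N (y - p) := by
        refine lintegral_congr fun p => ?_
        exact lintegral_const_mul' (E p) _ ENNReal.ofReal_ne_top
    _ = ∫⁻ p : V3 × V3, E p * ∫⁻ w : V3 × V3, N w := by
        refine lintegral_congr fun p => ?_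
        rw [lintegral_sub_right_eq_self N p]
    _ = (∫⁻ p : V3 × V3, E p) * ∫⁻ w : V3 × V3, N w :=
        lintegral_mul_const'' _ hEmeas.aemeasurable
    _ = ENNReal.ofReal (ε⁻¹ * ∫ z : V3, ‖fderiv ℝ κ z‖) * ENNReal.ofReal μ *
        ENNReal.ofReal (∫ y : V3 × V3, |f y|) := by rw [hEval, hNval]
    _ = ENNReal.ofReal ((μ / ε) * (∫ z : V3, ‖fderiv ℝ κ z‖) * ∫ y : V3 × V3, |f y|) := by
        rw [← ENNReal.ofReal_mul (by positivity), ← ENNReal.ofReal_mul (by positivity)]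
        congr 1
        rw [div_eq_mul_inv]
        ring


/-- Two-scale mollification estimate: for a smooth mollifier `κ`
supported in the closed unit ball and `0 < μ ≤ ε`,
`‖I‖_{L¹(ℝ⁶)} ≤ (μ/ε) ‖∇κ‖_{L¹} ‖f‖_{L¹}`; in particular, if `0 < μ(ε) ≤ ε²` then
`I → 0` in `L¹(ℝ⁶)` as `ε → 0⁺`. -/
theorem twoscale_mollification_estimate
    (κ : V3 → ℝ) (hκsmooth : ContDiff ℝ (⊤ : ℕ∞) κ) (hκpos : ∀ z, 0 ≤ κ z)
    (hκint : ∫ z : V3, κ z = 1)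
    (hκsupp : Function.support κ ⊆ Metric.closedBall (0 : V3) 1)
    (f : V3 × V3 → ℝ) (hf : Integrable f) :
    (∀ ε μ : ℝ, 0 < μ → μ ≤ ε →
      ∫⁻ y : V3 × V3, ENNReal.ofReal |commI κ f ε μ y| ≤
        ENNReal.ofReal ((μ / ε) * (∫ z : V3, ‖fderiv ℝ κ z‖) * (∫ y : V3 × V3, |f y|))) ∧
    (∀ μfun : ℝ → ℝ, (∀ ε : ℝ, 0 < ε → 0 < μfun ε ∧ μfun ε ≤ ε ^ 2) →
      Tendsto (fun ε : ℝ => ∫⁻ y : V3 × V3, ENNReal.ofReal |commI κ f ε (μfun ε) y|)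
        (nhdsWithin 0 (Ioi 0)) (nhds 0)) := by
  have part1 : ∀ ε μ : ℝ, 0 < μ → μ ≤ ε →
      ∫⁻ y : V3 × V3, ENNReal.ofReal |commI κ f ε μ y| ≤
        ENNReal.ofReal ((μ / ε) * (∫ z : V3, ‖fderiv ℝ κ z‖) * (∫ y : V3 × V3, |f y|)) :=
    fun ε μ hμ hμε => main_bound κ hκsmooth hκpos hκint hκsupp f hf ε μ hμ hμε
  refine ⟨part1, ?_⟩
  intro μfun hμfun
  set A : ℝ := ∫ z : V3, ‖fderiv ℝ κ z‖ with hA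
  set B : ℝ := ∫ y : V3 × V3, |f y| with hB
  have hAnn : 0 ≤ A := integral_nonneg fun z => norm_nonneg _
  have hBnn : 0 ≤ B := integral_nonneg fun y => abs_nonneg _
  have hb : ∀ ε ∈ Ioo (0:ℝ) 1,
      (∫⁻ y : V3 × V3, ENNReal.ofReal |commI κ f ε (μfun ε) y|) ≤
        ENNReal.ofReal (ε * (A * B)) := by
    intro ε hε
    obtain ⟨hμpos, hμle⟩ := hμfun ε hε.1
    have hεle : μfun ε ≤ ε := hμle.trans (by nlinarith [hε.1.le, hε.2.le])
    refine (part1 ε (μfun ε) hμpos hεle).trans (ENNReal.ofReal_le_ofReal ?_)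
    have hdiv : μfun ε / ε ≤ ε := by
      rw [div_le_iff₀ hε.1]
      calc μfun ε ≤ ε ^ 2 := hμle
        _ = ε * ε := sq ε
    calc μfun ε / ε * A * B = μfun ε / ε * (A * B) := by ring
      _ ≤ ε * (A * B) := by
          exact mul_le_mul_of_nonneg_right hdiv (mul_nonneg hAnn hBnn)
  have hup : Tendsto (fun ε : ℝ => ENNReal.ofReal (ε * (A * B)))
      (nhdsWithin 0 (Ioi 0)) (nhds 0) := by
    have h1 : Tendsto (fun ε : ℝ => ε * (A * B)) (nhdsWithin 0 (Ioi 0)) (nhds 0) := by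
      have := (continuous_mul_right (A * B)).tendsto (0 : ℝ)
      simpa using this.mono_left nhdsWithin_le_nhds
    have := (ENNReal.continuous_ofReal.tendsto 0).comp h1
    simpa [Function.comp_def] using this
  have hev : ∀ᶠ ε in nhdsWithin (0:ℝ) (Ioi 0),
      (∫⁻ y : V3 × V3, ENNReal.ofReal |commI κ f ε (μfun ε) y|) ≤
        ENNReal.ofReal (ε * (A * B)) := by
    filter_upwards [Ioo_mem_nhdsGT_of_mem (by norm_num : (0:ℝ) ∈ Ico (0:ℝ) 1)] with ε hε
    exact hb ε hε
  exact tendsto_of_tendsto_of_tendsto_of_le_of_le' tendsto_const_nhds hup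
    (Eventually.of_forall fun ε => zero_le) hev

end
end

section
/- For every real t ≥ 0, every δ > 0, and every R > 1, one has 0 ≤ t − t/(1+δt) ≤ δRt + max(t·ln t, 0)/ln R. -/
/-- For `t ≥ 0`, `δ > 0`, `R > 1`:
`0 ≤ t − t/(1+δt) ≤ δRt + (t ln t)⁺ / ln R`. -/
theorem renormalization_pointwise_bound
    (t δ R : ℝ) (ht : 0 ≤ t) (hδ : 0 < δ) (hR : 1 < R) :
    0 ≤ t - t / (1 + δ * t) ∧
      t - t / (1 + δ * t) ≤ δ * R * t + max (t * Real.log t) 0 / Real.log R := by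
  have h1 : (0:ℝ) < 1 + δ * t := by nlinarith
  have hlow : t / (1 + δ * t) ≤ t := div_le_self ht (by nlinarith)
  have key : t - t / (1 + δ * t) = δ * t ^ 2 / (1 + δ * t) := by
    field_simp; ring
  have hlnR : 0 < Real.log R := Real.log_pos hR
  constructor
  · linarith
  · rcases le_or_gt t R with hc | hc
    · have h2 : δ * t ^ 2 / (1 + δ * t) ≤ δ * R * t := by
        rw [div_le_iff₀ h1]
        nlinarith [mul_nonneg (mul_nonneg hδ.le ht) (sub_nonneg.2 hc), mul_nonneg (mul_nonneg hδ.le hδ.le) (mul_nonneg (mul_nonneg ht ht) (le_of_lt (lt_trans one_pos hR)))]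
      have h3 : 0 ≤ max (t * Real.log t) 0 / Real.log R :=
        div_nonneg (le_max_right _ _) hlnR.le
      linarith [key ▸ h2]
    · have hlt : Real.log R ≤ Real.log t := Real.log_le_log (by linarith) hc.le
      have hmax : max (t * Real.log t) 0 = t * Real.log t :=
        max_eq_left (mul_nonneg ht (by linarith))
      have h4 : t ≤ t * Real.log t / Real.log R := by
        rw [le_div_iff₀ hlnR]; nlinarith
      have h5 : 0 ≤ δ * R * t := by positivity
      have hpos : 0 ≤ t / (1 + δ * t) := div_nonneg ht h1.le
      rw [hmax]; linarith
end

section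
/- Let (X, μ) be a σ-finite measure space and let φ: ℝ → ℝ be convex. Let f_n, f ∈ L¹(μ) and h ∈ L¹(μ), and suppose φ∘f_n ∈ L¹(μ) for every n. Assume that for every g ∈ L^∞(μ): ∫_X f_n g dμ → ∫_X f g dμ and ∫_X φ(f_n) g dμ → ∫_X h g dμ as n → ∞. Then φ(f(x)) ≤ h(x) for μ-almost every x ∈ X. -/
/-!
Every supporting line `ℓ_q(s) = φ q + φ'₊(q) (s - q)` of `φ` is affine and lies below `φ`, so
testing the weak convergences against indicators of finite-measure sets `A` gives
`∫_A ℓ_q ∘ f = lim ∫_A ℓ_q ∘ fₙ ≤ lim ∫_A φ ∘ fₙ = ∫_A h`, whence `ℓ_q ∘ f ≤ h` a.e. by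
σ-finiteness. Rational `q` suffice, so a single null set is discarded, and `φ` is the supremum
of these lines: for `q ↓ s` the gap `φ s - ℓ_q(s)` is at most `(q - s) (φ'₊(q) - φ'₊(s))`,
which tends to `0` because `φ'₊` is monotone.
-/

open MeasureTheory Filter Set Topology

namespace ConvexOn

variable {S : Set ℝ} {φ : ℝ → ℝ}

theorem add_rightDeriv_mul_sub_le (hφ : ConvexOn ℝ S φ) {q s : ℝ} (hq : q ∈ interior S)
    (hs : s ∈ S) : φ q + derivWithin φ (Ioi q) q * (s - q) ≤ φ s := by
  rcases lt_trichotomy s q with hsq | rfl | hqs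
  · have h : slope φ s q ≤ derivWithin φ (Ioi q) q :=
      (hφ.slope_le_leftDeriv_of_mem_interior hs hq hsq).trans
        (hφ.leftDeriv_le_rightDeriv_of_mem_interior hq)
    rw [slope_def_field, div_le_iff₀ (sub_pos.2 hsq)] at h
    linarith
  · simp
  · have h := hφ.rightDeriv_le_slope_of_mem_interior hq hs hqs
    rw [slope_def_field, le_div_iff₀ (sub_pos.2 hqs)] at h
    linarith

theorem le_of_forall_rat_add_rightDeriv_mul_sub_le (hφ : ConvexOn ℝ univ φ) {s b : ℝ}
    (h : ∀ q : ℚ, φ q + derivWithin φ (Ioi (q : ℝ)) q * (s - q) ≤ b) : φ s ≤ b := by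
  obtain ⟨u, hu_anti, hsu, hu_lim⟩ := Real.exists_seq_rat_strictAnti_tendsto s
  set K := derivWithin φ (Ioi (u 0 : ℝ)) (u 0) - derivWithin φ (Ioi s) s
  have hbound : ∀ n, φ s ≤ b + ((u n : ℝ) - s) * K := fun n => by
    have hmono : derivWithin φ (Ioi (u n : ℝ)) (u n) ≤ derivWithin φ (Ioi (u 0 : ℝ)) (u 0) :=
      hφ.monotoneOn_rightDeriv (by simp) (by simp) (by exact_mod_cast hu_anti.antitone n.zero_le)
    have hsupport := hφ.add_rightDeriv_mul_sub_le (q := s) (s := u n) (by simp) (mem_univ _)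
    have hgap : ((u n : ℝ) - s) * (derivWithin φ (Ioi (u n : ℝ)) (u n) - derivWithin φ (Ioi s) s)
        ≤ ((u n : ℝ) - s) * K :=
      mul_le_mul_of_nonneg_left (by linarith) (sub_pos.2 (hsu n)).le
    linarith [h (u n)]
  have hlim : Tendsto (fun n => b + ((u n : ℝ) - s) * K) atTop (𝓝 b) := by
    simpa using tendsto_const_nhds.add ((hu_lim.sub_const s).mul_const K)
  exact ge_of_tendsto' hlim hbound

end ConvexOn

section WeakLimit

variable {X : Type*} [MeasurableSpace X] {μ : Measure X}

theorem tendsto_setIntegral_of_tendsto_integral_mul {ι : Type*} {l : Filter ι}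
    {F : ι → X → ℝ} {G : X → ℝ}
    (hweak : ∀ g : X → ℝ, Measurable g → (∃ M : ℝ, ∀ x, |g x| ≤ M) →
      Tendsto (fun i => ∫ x, F i x * g x ∂μ) l (𝓝 (∫ x, G x * g x ∂μ)))
    {A : Set X} (hA : MeasurableSet A) :
    Tendsto (fun i => ∫ x in A, F i x ∂μ) l (𝓝 (∫ x in A, G x ∂μ)) := by
  have hind : ∀ u : X → ℝ, ∫ x, u x * A.indicator 1 x ∂μ = ∫ x in A, u x ∂μ := fun u => by
    simp_rw [← indicator_mul_right, Pi.one_apply, mul_one]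
    exact integral_indicator hA
  have hbdd : ∃ M : ℝ, ∀ x, |A.indicator (1 : X → ℝ) x| ≤ M :=
    ⟨1, fun x => by by_cases hx : x ∈ A <;> simp [hx]⟩
  simpa only [hind] using hweak (A.indicator 1) (measurable_one.indicator hA) hbdd

theorem ae_le_of_forall_setIntegral_le_of_sigmaFinite [SigmaFinite μ] {u v : X → ℝ}
    (hu : ∀ A, MeasurableSet A → μ A < ⊤ → IntegrableOn u A μ)
    (hv : ∀ A, MeasurableSet A → μ A < ⊤ → IntegrableOn v A μ)
    (huv : ∀ A, MeasurableSet A → μ A < ⊤ → ∫ x in A, u x ∂μ ≤ ∫ x in A, v x ∂μ) :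
    ∀ᵐ x ∂μ, u x ≤ v x := by
  have h := ae_nonneg_of_forall_setIntegral_nonneg_of_sigmaFinite (f := v - u)
    (fun A hA hμA => (hv A hA hμA).sub (hu A hA hμA)) fun A hA hμA => by
      rw [integral_sub' (hv A hA hμA) (hu A hA hμA), sub_nonneg]
      exact huv A hA hμA
  filter_upwards [h] with x hx
  simpa using hx

theorem setIntegral_const_add_mul {A : Set X} (hA : μ A < ⊤) (a c : ℝ) {u : X → ℝ}
    (hu : IntegrableOn u A μ) :
    ∫ x in A, (a + c * u x) ∂μ = μ.real A * a + c * ∫ x in A, u x ∂μ := by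
  have ha : IntegrableOn (fun _ => a) A μ := integrableOn_const hA.ne
  rw [integral_add ha (hu.const_mul c), setIntegral_const, integral_const_mul, smul_eq_mul]

theorem ae_add_mul_le_of_tendsto_setIntegral [SigmaFinite μ] {φ : ℝ → ℝ} {a c : ℝ}
    (hφ : ∀ s, a + c * s ≤ φ s) {ι : Type*} {l : Filter ι} [l.NeBot]
    {f : ι → X → ℝ} {flim h : X → ℝ}
    (hf : ∀ i, Integrable (f i) μ) (hflim : Integrable flim μ) (hh : Integrable h μ)
    (hφf : ∀ i, Integrable (fun x => φ (f i x)) μ)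
    (hlim : ∀ A, MeasurableSet A →
      Tendsto (fun i => ∫ x in A, f i x ∂μ) l (𝓝 (∫ x in A, flim x ∂μ)))
    (hlimφ : ∀ A, MeasurableSet A →
      Tendsto (fun i => ∫ x in A, φ (f i x) ∂μ) l (𝓝 (∫ x in A, h x ∂μ))) :
    ∀ᵐ x ∂μ, a + c * flim x ≤ h x := by
  refine ae_le_of_forall_setIntegral_le_of_sigmaFinite
    (fun A _ hμA => (integrableOn_const hμA.ne).add (hflim.integrableOn.const_mul c))
    (fun A _ _ => hh.integrableOn) fun A hA hμA => ?_
  have hle : ∀ i, μ.real A * a + c * ∫ x in A, f i x ∂μ ≤ ∫ x in A, φ (f i x) ∂μ := fun i => by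
    rw [← setIntegral_const_add_mul hμA a c (hf i).integrableOn]
    exact setIntegral_mono_on ((integrableOn_const hμA.ne).add ((hf i).integrableOn.const_mul c))
      (hφf i).integrableOn hA fun x _ => hφ (f i x)
  rw [setIntegral_const_add_mul hμA a c hflim.integrableOn]
  exact le_of_tendsto_of_tendsto' (tendsto_const_nhds.add ((hlim A hA).const_mul c))
    (hlimφ A hA) hle

end WeakLimit

/-- Lower semicontinuity of convex composition under weak L¹ convergence:
if `f_n ⇀ f` and `φ(f_n) ⇀ h` weakly in `L¹` (tested against all bounded measurable
functions) with `φ` convex, then `φ(f) ≤ h` almost everywhere. -/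
theorem convex_weak_limit_ae_le
    {X : Type*} [MeasurableSpace X] (μ : Measure X) [SigmaFinite μ]
    (φ : ℝ → ℝ) (hφ : ConvexOn ℝ Set.univ φ)
    (f : ℕ → X → ℝ) (flim h : X → ℝ)
    (hf : ∀ n, Integrable (f n) μ) (hflim : Integrable flim μ) (hh : Integrable h μ)
    (hφf : ∀ n, Integrable (fun x => φ (f n x)) μ)
    (hweak : ∀ g : X → ℝ, Measurable g → (∃ M : ℝ, ∀ x, |g x| ≤ M) →
      Tendsto (fun n => ∫ x, f n x * g x ∂μ) atTop (nhds (∫ x, flim x * g x ∂μ)))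
    (hweakφ : ∀ g : X → ℝ, Measurable g → (∃ M : ℝ, ∀ x, |g x| ≤ M) →
      Tendsto (fun n => ∫ x, φ (f n x) * g x ∂μ) atTop (nhds (∫ x, h x * g x ∂μ))) :
    ∀ᵐ x ∂μ, φ (flim x) ≤ h x := by
  set D : ℝ → ℝ := fun q => derivWithin φ (Ioi q) q
  have hline : ∀ q : ℚ, ∀ᵐ x ∂μ, φ q + D q * (flim x - q) ≤ h x := fun q => by
    have hsupport : ∀ s, (φ q - D q * q) + D q * s ≤ φ s := fun s => by
      linarith [hφ.add_rightDeriv_mul_sub_le (q := q) (s := s) (by simp) (mem_univ s)]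
    filter_upwards [ae_add_mul_le_of_tendsto_setIntegral hsupport hf hflim hh hφf
      (fun A hA => tendsto_setIntegral_of_tendsto_integral_mul hweak hA)
      (fun A hA => tendsto_setIntegral_of_tendsto_integral_mul hweakφ hA)] with x hx
    linarith
  filter_upwards [ae_all_iff.2 hline] with x hx
  exact hφ.le_of_forall_rat_add_rightDeriv_mul_sub_le hx
end

section
/- Let (X, μ) be a finite measure space, let M > 0, and let g_n, g: X → ℝ be measurable with |g_n| ≤ M μ-a.e. for every n, such that ∫_X g_n h dμ → ∫_X g h dμ for every h ∈ L¹(μ). Let L_n, L: X → ℝ be measurable with L_n ∈ L¹(μ), L_n → L μ-almost everywhere, sup_n ∫_X |L_n| dμ < ∞, and suppose the family {L_n} is uniformly integrable: for every ε > 0 there exists δ > 0 such that for every measurable set A with μ(A) < δ, sup_n ∫_A |L_n| dμ ≤ ε. Then L ∈ L¹(μ) and for every bounded measurable φ: X → ℝ, ∫_X φ g_n L_n dμ → ∫_X φ g L dμ as n → ∞. -/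
open MeasureTheory Filter

/-!
Split `φ g_n L_n - φ g L = φ g_n (L_n - L) + (g_n - g) φ L`. The ε-δ condition together with
the uniform `L¹` bound is uniform integrability in Mathlib's sense, so `L ∈ L¹` and, by Vitali's
theorem, `L_n → L` in `L¹`; as `φ g_n` is uniformly bounded, the integral of the first term
tends to zero. So does that of the second, by weak-* convergence of `g_n` tested against
`φ L ∈ L¹`.
-/

namespace MeasureTheory

variable {α : Type*} [MeasurableSpace α] {μ : Measure α}

section UniformIntegrable

variable {ι E : Type*} [NormedAddCommGroup E] {f : ι → α → E}

theorem unifIntegrable_one_of_forall_setIntegral_norm_le (hf : ∀ i, Integrable (f i) μ)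
    (h : ∀ ε : ℝ, 0 < ε → ∃ δ : ℝ, 0 < δ ∧ ∀ s : Set α, MeasurableSet s →
      μ s < ENNReal.ofReal δ → ∀ i, ∫ x in s, ‖f i x‖ ∂μ ≤ ε) :
    UnifIntegrable f 1 μ := by
  intro ε hε
  obtain ⟨δ, hδ, hsmall⟩ := h ε hε
  refine ⟨δ / 2, half_pos hδ, fun i s hs hμs => ?_⟩
  have hμs' : μ s < ENNReal.ofReal δ :=
    hμs.trans_lt ((ENNReal.ofReal_lt_ofReal_iff hδ).mpr (half_lt_self hδ))
  rw [eLpNorm_indicator_eq_eLpNorm_restrict hs, eLpNorm_one_eq_lintegral_enorm,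
    ← ofReal_integral_norm_eq_lintegral_enorm (hf i).restrict]
  exact ENNReal.ofReal_le_ofReal (hsmall s hs hμs' i)

theorem uniformIntegrable_one_of_forall_setIntegral_norm_le {C : ℝ}
    (hf : ∀ i, Integrable (f i) μ) (hC : ∀ i, ∫ x, ‖f i x‖ ∂μ ≤ C)
    (h : ∀ ε : ℝ, 0 < ε → ∃ δ : ℝ, 0 < δ ∧ ∀ s : Set α, MeasurableSet s →
      μ s < ENNReal.ofReal δ → ∀ i, ∫ x in s, ‖f i x‖ ∂μ ≤ ε) :
    UniformIntegrable f 1 μ := by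
  refine ⟨fun i => (hf i).1, unifIntegrable_one_of_forall_setIntegral_norm_le hf h,
    C.toNNReal, fun i => ?_⟩
  rw [eLpNorm_one_eq_lintegral_enorm, ← ofReal_integral_norm_eq_lintegral_enorm (hf i)]
  exact ENNReal.ofReal_le_ofReal (hC i)

end UniformIntegrable

theorem tendsto_integral_mul_of_tendsto_eLpNorm {𝕜 ι : Type*} [RCLike 𝕜] {l : Filter ι}
    {G : ι → α → 𝕜} {Glim : α → 𝕜} {f : ι → α → 𝕜} {flim : α → 𝕜} {K : ℝ}
    (hG : ∀ i, AEStronglyMeasurable (G i) μ) (hGK : ∀ i, ∀ᵐ x ∂μ, ‖G i x‖ ≤ K)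
    (hGw : Tendsto (fun i => ∫ x, G i x * flim x ∂μ) l (nhds (∫ x, Glim x * flim x ∂μ)))
    (hf : ∀ i, Integrable (f i) μ) (hflim : Integrable flim μ)
    (hfL1 : Tendsto (fun i => eLpNorm (f i - flim) 1 μ) l (nhds 0)) :
    Tendsto (fun i => ∫ x, G i x * f i x ∂μ) l (nhds (∫ x, Glim x * flim x ∂μ)) := by
  have hmul : ∀ {h : α → 𝕜}, Integrable h μ → ∀ i, Integrable (fun x => G i x * h x) μ :=
    fun hh i => hh.bdd_mul (hG i) (hGK i)
  have hbound : ∀ i, eLpNorm (fun x => G i x * (f i - flim) x) 1 μ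
      ≤ ENNReal.ofReal K * eLpNorm (f i - flim) 1 μ := fun i =>
    eLpNorm_le_mul_eLpNorm_of_ae_le_mul (by
      filter_upwards [hGK i] with x hx
      rw [norm_mul]
      exact mul_le_mul_of_nonneg_right hx (norm_nonneg _)) 1
  have hdiff : Tendsto (fun i => ∫ x, G i x * (f i - flim) x ∂μ) l (nhds 0) := by
    have hL1 : Tendsto (fun i => eLpNorm ((fun x => G i x * (f i - flim) x) - 0) 1 μ) l
        (nhds 0) := by
      simp only [sub_zero]
      refine tendsto_of_tendsto_of_tendsto_of_le_of_le tendsto_const_nhds ?_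
        (fun _ => bot_le) hbound
      simpa using ENNReal.Tendsto.const_mul hfL1 (Or.inr ENNReal.ofReal_ne_top)
    simpa only [Pi.zero_apply, integral_zero] using tendsto_integral_of_L1' (0 : α → 𝕜)
      aestronglyMeasurable_zero (Eventually.of_forall fun i => hmul ((hf i).sub hflim) i) hL1
  have hsplit : ∀ i, ∫ x, G i x * f i x ∂μ
      = ∫ x, G i x * (f i - flim) x ∂μ + ∫ x, G i x * flim x ∂μ := fun i => by
    rw [← integral_add (hmul ((hf i).sub hflim) i) (hmul hflim i)]
    simp only [Pi.sub_apply, mul_sub, sub_add_cancel]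
  simpa only [hsplit, zero_add] using hdiff.add hGw

end MeasureTheory

theorem weakstar_ae_product_convergence_general
    {X : Type*} [MeasurableSpace X] (μ : Measure X) [IsFiniteMeasure μ]
    (M : ℝ)
    (g : ℕ → X → ℝ) (glim : X → ℝ)
    (hgmeas : ∀ n, Measurable (g n))
    (hgbdd : ∀ n, ∀ᵐ x ∂μ, |g n x| ≤ M)
    (hgweak : ∀ h : X → ℝ, Integrable h μ →
      Tendsto (fun n => ∫ x, g n x * h x ∂μ) atTop (nhds (∫ x, glim x * h x ∂μ)))
    (L : ℕ → X → ℝ) (Llim : X → ℝ)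
    (hLint : ∀ n, Integrable (L n) μ)
    (hLae : ∀ᵐ x ∂μ, Tendsto (fun n => L n x) atTop (nhds (Llim x)))
    (hLbdd : ∃ C : ℝ, ∀ n, ∫ x, |L n x| ∂μ ≤ C)
    (hLui : ∀ ε : ℝ, 0 < ε → ∃ δ : ℝ, 0 < δ ∧ ∀ A : Set X, MeasurableSet A →
      μ A < ENNReal.ofReal δ → ∀ n, ∫ x in A, |L n x| ∂μ ≤ ε) :
    Integrable Llim μ ∧
      ∀ φ : X → ℝ, Measurable φ → (∃ M' : ℝ, ∀ x, |φ x| ≤ M') →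
        Tendsto (fun n => ∫ x, φ x * g n x * L n x ∂μ) atTop
          (nhds (∫ x, φ x * glim x * Llim x ∂μ)) := by
  obtain ⟨C, hC⟩ := hLbdd
  have hUI : UniformIntegrable L 1 μ :=
    uniformIntegrable_one_of_forall_setIntegral_norm_le hLint hC hLui
  have hLlim : Integrable Llim μ := hUI.integrable_of_ae_tendsto hLae
  refine ⟨hLlim, fun φ hφ ⟨K, hK⟩ => ?_⟩
  have hL1 : Tendsto (fun n => eLpNorm (L n - Llim) 1 μ) atTop (nhds 0) :=
    tendsto_Lp_finite_of_tendsto_ae le_rfl ENNReal.one_ne_top hUI.1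
      (memLp_one_iff_integrable.2 hLlim) hUI.2.1 hLae
  have hφg : ∀ n, ∀ᵐ x ∂μ, ‖φ x * g n x‖ ≤ K * M := fun n => by
    filter_upwards [hgbdd n] with x hx
    rw [norm_mul, Real.norm_eq_abs, Real.norm_eq_abs]
    exact mul_le_mul (hK x) hx (abs_nonneg _) ((abs_nonneg _).trans (hK x))
  have hweak : Tendsto (fun n => ∫ x, φ x * g n x * Llim x ∂μ) atTop
      (nhds (∫ x, φ x * glim x * Llim x ∂μ)) := by
    have hφL : Integrable (fun x => φ x * Llim x) μ :=
      hLlim.bdd_mul hφ.aestronglyMeasurable (Eventually.of_forall hK)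
    simpa only [mul_comm (φ _), mul_assoc] using hgweak _ hφL
  exact tendsto_integral_mul_of_tendsto_eLpNorm
    (fun n => (hφ.mul (hgmeas n)).aestronglyMeasurable) hφg hweak hLint hLlim hL1

/-- Product convergence: on a finite measure space, if `g_n` is uniformly
bounded and converges weak-* (tested against every `L¹` function) to `g`, and `L_n → L`
a.e. with uniformly bounded and uniformly integrable `L¹` norms, then `L ∈ L¹` and
`∫ φ g_n L_n → ∫ φ g L` for every bounded measurable `φ`. -/
theorem weakstar_ae_product_convergence
    {X : Type*} [MeasurableSpace X] (μ : Measure X) [IsFiniteMeasure μ]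
    (M : ℝ) (hM : 0 < M)
    (g : ℕ → X → ℝ) (glim : X → ℝ)
    (hgmeas : ∀ n, Measurable (g n)) (hglimmeas : Measurable glim)
    (hgbdd : ∀ n, ∀ᵐ x ∂μ, |g n x| ≤ M)
    (hgweak : ∀ h : X → ℝ, Integrable h μ →
      Tendsto (fun n => ∫ x, g n x * h x ∂μ) atTop (nhds (∫ x, glim x * h x ∂μ)))
    (L : ℕ → X → ℝ) (Llim : X → ℝ)
    (hLmeas : ∀ n, Measurable (L n)) (hLlimmeas : Measurable Llim)
    (hLint : ∀ n, Integrable (L n) μ)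
    (hLae : ∀ᵐ x ∂μ, Tendsto (fun n => L n x) atTop (nhds (Llim x)))
    (hLbdd : ∃ C : ℝ, ∀ n, ∫ x, |L n x| ∂μ ≤ C)
    (hLui : ∀ ε : ℝ, 0 < ε → ∃ δ : ℝ, 0 < δ ∧ ∀ A : Set X, MeasurableSet A →
      μ A < ENNReal.ofReal δ → ∀ n, ∫ x in A, |L n x| ∂μ ≤ ε) :
    Integrable Llim μ ∧
      ∀ φ : X → ℝ, Measurable φ → (∃ M' : ℝ, ∀ x, |φ x| ≤ M') →
        Tendsto (fun n => ∫ x, φ x * g n x * L n x ∂μ) atTop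
          (nhds (∫ x, φ x * glim x * Llim x ∂μ)) :=
  weakstar_ae_product_convergence_general μ M g glim hgmeas hgbdd hgweak L Llim hLint hLae hLbdd
    hLui
end

section
/- Let (X, μ) be a measure space and let f ∈ L¹(μ) with f ≥ 0 μ-a.e., ∫_X f dμ ≤ C₀, and ∫_X f · max(ln f, 0) dμ ≤ C₁ for constants C₀, C₁ ≥ 0. Then for every δ > 0 and every R > 1, ∫_X (f − f/(1+δf)) dμ ≤ δ R C₀ + C₁/ln R. In particular, ∫_X (f − f/(1+δf)) dμ → 0 as δ → 0, uniformly over all f satisfying the two bounds with the same constants C₀, C₁. -/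
open MeasureTheory Real

lemma renorm_pointwise {s δ R : ℝ} (hs : 0 ≤ s) (hδ : 0 < δ) (hR : 1 < R) :
    s - s / (1 + δ * s) ≤ δ * R * s + s * max (Real.log s) 0 / Real.log R := by
  have h1 : (0:ℝ) < 1 + δ * s := by positivity
  have hlogR : 0 < Real.log R := Real.log_pos hR
  have heq : s - s / (1 + δ * s) = δ * s ^ 2 / (1 + δ * s) := by
    field_simp; ring
  rw [heq]
  rcases le_or_gt s R with h | h
  · have h2 : δ * s ^ 2 / (1 + δ * s) ≤ δ * R * s := by
      rw [div_le_iff₀ h1]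
      nlinarith [mul_nonneg (mul_nonneg hδ.le hs) (sub_nonneg.2 h),
        mul_nonneg (mul_nonneg (mul_nonneg hδ.le hδ.le) hs)
          (mul_nonneg (by linarith : (0:ℝ) ≤ R) hs)]
    have h3 : 0 ≤ s * max (Real.log s) 0 / Real.log R := by positivity
    linarith
  · have hlogs : Real.log R ≤ Real.log s := Real.log_le_log (by linarith) h.le
    have h2 : δ * s ^ 2 / (1 + δ * s) ≤ s := by
      rw [div_le_iff₀ h1]; nlinarith [mul_nonneg hδ.le (mul_nonneg hs hs)]
    have h3 : s ≤ s * max (Real.log s) 0 / Real.log R := by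
      rw [le_div_iff₀ hlogR]
      have : s * Real.log R ≤ s * max (Real.log s) 0 :=
        mul_le_mul_of_nonneg_left (le_max_of_le_left hlogs) hs
      linarith
    have h4 : 0 ≤ δ * R * s := by positivity
    linarith

lemma renorm_integral_bound_main
    {X : Type*} [MeasurableSpace X] (μ : Measure X)
    (C₀ C₁ : ℝ) (hC₀ : 0 ≤ C₀) (hC₁ : 0 ≤ C₁)
    (f : X → ℝ) (hf : Integrable f μ) (hnn : ∀ᵐ x ∂μ, 0 ≤ f x)
    (hmass : (∫ x, f x ∂μ) ≤ C₀)
    (hent : (∫⁻ x, ENNReal.ofReal (f x * max (Real.log (f x)) 0) ∂μ) ≤ ENNReal.ofReal C₁)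
    (δ : ℝ) (hδ : 0 < δ) (R : ℝ) (hR : 1 < R) :
    (∫ x, (f x - f x / (1 + δ * f x)) ∂μ) ≤ δ * R * C₀ + C₁ / Real.log R := by
  have hlogR : 0 < Real.log R := Real.log_pos hR
  have hmeas2 : AEStronglyMeasurable (fun x => f x / (1 + δ * f x)) μ :=
    (hf.aestronglyMeasurable.aemeasurable.div
      (aemeasurable_const.add (aemeasurable_const.mul
        hf.aestronglyMeasurable.aemeasurable))).aestronglyMeasurable
  have hbd : ∀ᵐ x ∂μ, ‖f x / (1 + δ * f x)‖ ≤ ‖f x‖ := by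
    filter_upwards [hnn] with x hx
    have h1 : (0:ℝ) < 1 + δ * f x := by positivity
    have h2 : 0 ≤ f x / (1 + δ * f x) := by positivity
    rw [Real.norm_eq_abs, Real.norm_eq_abs, abs_of_nonneg h2, abs_of_nonneg hx]
    rw [div_le_iff₀ h1]; nlinarith [mul_nonneg hδ.le (mul_nonneg hx hx)]
  have hint2 : Integrable (fun x => f x / (1 + δ * f x)) μ :=
    Integrable.mono hf hmeas2 hbd
  have hinth : Integrable (fun x => f x - f x / (1 + δ * f x)) μ := hf.sub hint2
  have hhnn : ∀ᵐ x ∂μ, 0 ≤ f x - f x / (1 + δ * f x) := by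
    filter_upwards [hnn] with x hx
    have h1 : (0:ℝ) < 1 + δ * f x := by positivity
    have : f x / (1 + δ * f x) ≤ f x := by
      rw [div_le_iff₀ h1]; nlinarith [mul_nonneg hδ.le (mul_nonneg hx hx)]
    linarith
  -- express integral as lintegral
  rw [integral_eq_lintegral_of_nonneg_ae hhnn hinth.aestronglyMeasurable]
  have key : (∫⁻ x, ENNReal.ofReal (f x - f x / (1 + δ * f x)) ∂μ)
      ≤ ENNReal.ofReal (δ * R * C₀ + C₁ / Real.log R) := by
    have step1 : (∫⁻ x, ENNReal.ofReal (f x - f x / (1 + δ * f x)) ∂μ)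
        ≤ ∫⁻ x, (ENNReal.ofReal (δ * R) * ENNReal.ofReal (f x)
            + ENNReal.ofReal (1 / Real.log R)
              * ENNReal.ofReal (f x * max (Real.log (f x)) 0)) ∂μ := by
      apply lintegral_mono_ae
      filter_upwards [hnn] with x hx
      have hpt := renorm_pointwise hx hδ hR
      calc ENNReal.ofReal (f x - f x / (1 + δ * f x))
          ≤ ENNReal.ofReal (δ * R * f x + f x * max (Real.log (f x)) 0 / Real.log R) :=
            ENNReal.ofReal_le_ofReal hpt
        _ = ENNReal.ofReal (δ * R * f x)
            + ENNReal.ofReal (f x * max (Real.log (f x)) 0 / Real.log R) := by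
            rw [ENNReal.ofReal_add (by positivity) (by positivity)]
        _ = ENNReal.ofReal (δ * R) * ENNReal.ofReal (f x)
            + ENNReal.ofReal (1 / Real.log R)
              * ENNReal.ofReal (f x * max (Real.log (f x)) 0) := by
            rw [← ENNReal.ofReal_mul (by positivity), ← ENNReal.ofReal_mul (by positivity)]
            ring_nf
    have hmeasf : AEMeasurable (fun x => ENNReal.ofReal (f x)) μ :=
      ENNReal.measurable_ofReal.comp_aemeasurable hf.aestronglyMeasurable.aemeasurable
    have step2 : (∫⁻ x, (ENNReal.ofReal (δ * R) * ENNReal.ofReal (f x)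
            + ENNReal.ofReal (1 / Real.log R)
              * ENNReal.ofReal (f x * max (Real.log (f x)) 0)) ∂μ)
        = ENNReal.ofReal (δ * R) * (∫⁻ x, ENNReal.ofReal (f x) ∂μ)
          + ENNReal.ofReal (1 / Real.log R)
            * (∫⁻ x, ENNReal.ofReal (f x * max (Real.log (f x)) 0) ∂μ) := by
      rw [lintegral_add_left' (hmeasf.const_mul _), lintegral_const_mul' _ _ (by simp),
        lintegral_const_mul' _ _ (by simp)]
    have hfl : (∫⁻ x, ENNReal.ofReal (f x) ∂μ) = ENNReal.ofReal (∫ x, f x ∂μ) :=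
      (ofReal_integral_eq_lintegral_ofReal hf hnn).symm
    calc (∫⁻ x, ENNReal.ofReal (f x - f x / (1 + δ * f x)) ∂μ)
        ≤ _ := step1
      _ = _ := step2
      _ ≤ ENNReal.ofReal (δ * R) * ENNReal.ofReal C₀
          + ENNReal.ofReal (1 / Real.log R) * ENNReal.ofReal C₁ := by
          gcongr
          rw [hfl]
          exact ENNReal.ofReal_le_ofReal hmass
      _ = ENNReal.ofReal (δ * R * C₀ + C₁ / Real.log R) := by
          rw [← ENNReal.ofReal_mul (by positivity), ← ENNReal.ofReal_mul (by positivity),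
            ← ENNReal.ofReal_add (by positivity) (by positivity)]
          congr 1
          ring
  exact ENNReal.toReal_le_of_le_ofReal (by positivity) key

/-- Integrated renormalization bound: if `f ≥ 0` has mass `≤ C₀`
and positive-part entropy `≤ C₁`, then for all `δ > 0`, `R > 1`,
`∫ (f − f/(1+δf)) ≤ δ R C₀ + C₁/ln R`; in particular `∫ (f − f/(1+δf)) → 0` as `δ → 0`,
uniformly over all such `f`. -/
theorem renormalization_integral_bound
    {X : Type*} [MeasurableSpace X] (μ : Measure X)
    (C₀ C₁ : ℝ) (hC₀ : 0 ≤ C₀) (hC₁ : 0 ≤ C₁) :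
    (∀ f : X → ℝ, Integrable f μ → (∀ᵐ x ∂μ, 0 ≤ f x) →
      (∫ x, f x ∂μ) ≤ C₀ →
      (∫⁻ x, ENNReal.ofReal (f x * max (Real.log (f x)) 0) ∂μ) ≤ ENNReal.ofReal C₁ →
      ∀ δ : ℝ, 0 < δ → ∀ R : ℝ, 1 < R →
        (∫ x, (f x - f x / (1 + δ * f x)) ∂μ) ≤ δ * R * C₀ + C₁ / Real.log R) ∧
    (∀ ε : ℝ, 0 < ε → ∃ δ₀ : ℝ, 0 < δ₀ ∧ ∀ δ : ℝ, 0 < δ → δ ≤ δ₀ →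
      ∀ f : X → ℝ, Integrable f μ → (∀ᵐ x ∂μ, 0 ≤ f x) →
        (∫ x, f x ∂μ) ≤ C₀ →
        (∫⁻ x, ENNReal.ofReal (f x * max (Real.log (f x)) 0) ∂μ) ≤ ENNReal.ofReal C₁ →
        (∫ x, (f x - f x / (1 + δ * f x)) ∂μ) ≤ ε) := by
  constructor
  · intro f hf hnn hmass hent δ hδ R hR
    exact renorm_integral_bound_main μ C₀ C₁ hC₀ hC₁ f hf hnn hmass hent δ hδ R hR
  · intro ε hε
    set L : ℝ := 1 + 2 * C₁ / ε with hLdef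
    have hL : 0 < L := by positivity
    set R : ℝ := Real.exp L with hRdef
    have hRpos : 0 < R := Real.exp_pos L
    have hR1 : 1 < R := by
      calc (1:ℝ) = Real.exp 0 := Real.exp_zero.symm
        _ < Real.exp L := Real.exp_lt_exp.2 hL
    refine ⟨ε / (2 * R * (C₀ + 1)), by positivity, ?_⟩
    intro δ hδ hδle f hf hnn hmass hent
    have hmain := renorm_integral_bound_main μ C₀ C₁ hC₀ hC₁ f hf hnn hmass hent δ hδ R hR1
    have h1 : δ * R * C₀ ≤ ε / 2 := by
      have hstep : δ * R * C₀ ≤ (ε / (2 * R * (C₀ + 1))) * R * C₀ := by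
        have := mul_le_mul_of_nonneg_right (mul_le_mul_of_nonneg_right hδle hRpos.le) hC₀
        linarith
      have heq : (ε / (2 * R * (C₀ + 1))) * R * C₀ = ε * C₀ / (2 * (C₀ + 1)) := by
        field_simp
      have hfin : ε * C₀ / (2 * (C₀ + 1)) ≤ ε / 2 := by
        rw [div_le_div_iff₀ (by positivity) (by norm_num)]
        nlinarith
      linarith
    have h2 : C₁ / Real.log R ≤ ε / 2 := by
      rw [hRdef, Real.log_exp, div_le_iff₀ hL]
      have hee : ε / 2 * (2 * C₁ / ε) = C₁ := by
        field_simp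
      nlinarith
    linarith
end
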